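/- arXiv:math/0405023 — 10 statements merged into one kernel-verified Lean document; each statement's English description precedes it below -/
import Mathlib

section
/- (General Theorem, product form) Let n ≥ 1, let r₁, …, rₙ be integers that are pairwise coprime, let a₁, …, aₙ, c₁, …, cₙ be integers with aᵢ coprime to rᵢ for every i, and let P₁, …, Pₙ be propositions such that for every i, Pᵢ holds if and only if rᵢ divides cᵢ. Then all of P₁, …, Pₙ hold simultaneously if and only if the product r₁⋯rₙ divides ∑_{i=1}^{n} aᵢ·cᵢ·∏_{j≠i} rⱼ. -/
theorem general_theorem_product_form (n : ℕ) (hn : 1 ≤ n)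
    (r a c : Fin n → ℤ) (P : Fin n → Prop)
    (hr : ∀ i j, i ≠ j → Int.gcd (r i) (r j) = 1)
    (ha : ∀ i, Int.gcd (a i) (r i) = 1)
    (hP : ∀ i, P i ↔ r i ∣ c i) :
    (∀ i, P i) ↔
      (∏ i, r i) ∣ ∑ i, a i * c i * ∏ j ∈ Finset.univ.erase i, r j := by
  have hcop : ∀ i j : Fin n, i ≠ j → IsCoprime (r i) (r j) := fun i j h =>
    Int.isCoprime_iff_gcd_eq_one.mpr (hr i j h)
  have hterm : ∀ i j : Fin n, i ≠ j →
      r i ∣ a j * c j * ∏ k ∈ Finset.univ.erase j, r k := by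
    intro i j h
    exact Dvd.dvd.mul_left
      (Finset.dvd_prod_of_mem r (Finset.mem_erase.mpr ⟨h, Finset.mem_univ i⟩)) _
  constructor
  · intro hp
    apply Finset.prod_dvd_of_coprime
    · intro i _ j _ hij
      exact hcop i j hij
    · intro i _
      apply Finset.dvd_sum
      intro j _
      by_cases h : i = j
      · subst h
        exact Dvd.dvd.mul_right (Dvd.dvd.mul_left ((hP i).mp (hp i)) _) _
      · exact hterm i j h
  · intro hd i
    have h1 : r i ∣ ∑ j, a j * c j * ∏ k ∈ Finset.univ.erase j, r k :=
      dvd_trans (Finset.dvd_prod_of_mem r (Finset.mem_univ i)) hd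
    have h2 : r i ∣ ∑ j ∈ Finset.univ.erase i, a j * c j * ∏ k ∈ Finset.univ.erase j, r k :=
      Finset.dvd_sum fun j hj => hterm i j (Finset.ne_of_mem_erase hj).symm
    have h3 : r i ∣ a i * c i * ∏ k ∈ Finset.univ.erase i, r k := by
      have heq := Finset.add_sum_erase Finset.univ
        (fun j => a j * c j * ∏ k ∈ Finset.univ.erase j, r k) (Finset.mem_univ i)
      rw [← heq] at h1
      exact (dvd_add_left h2).mp h1
    have hca : IsCoprime (r i) (a i * ∏ k ∈ Finset.univ.erase i, r k) := by
      apply IsCoprime.mul_right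
      · exact (Int.isCoprime_iff_gcd_eq_one.mpr (Int.gcd_comm (a i) (r i) ▸ ha i))
      · exact IsCoprime.prod_right fun k hk => hcop i k (Finset.ne_of_mem_erase hk).symm
    refine (hP i).mpr (hca.dvd_of_dvd_mul_right ?_)
    have : a i * c i * ∏ k ∈ Finset.univ.erase i, r k
        = c i * (a i * ∏ k ∈ Finset.univ.erase i, r k) := by ring
    rwa [this] at h3
end

section
/- (General Theorem, rational form) Let n ≥ 1, let r₁, …, rₙ be nonzero integers that are pairwise coprime, let a₁, …, aₙ, c₁, …, cₙ be integers with aᵢ coprime to rᵢ for every i, and let P₁, …, Pₙ be propositions such that for every i, Pᵢ holds if and only if rᵢ divides cᵢ. Then all of P₁, …, Pₙ hold simultaneously if and only if the rational number ∑_{i=1}^{n} aᵢ·cᵢ/rᵢ is an integer. -/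
theorem general_theorem_rational_form (n : ℕ) (hn : 1 ≤ n)
    (r a c : Fin n → ℤ) (P : Fin n → Prop)
    (hr0 : ∀ i, r i ≠ 0)
    (hr : ∀ i j, i ≠ j → Int.gcd (r i) (r j) = 1)
    (ha : ∀ i, Int.gcd (a i) (r i) = 1)
    (hP : ∀ i, P i ↔ r i ∣ c i) :
    (∀ i, P i) ↔
      ∃ z : ℤ, (∑ i, (a i * c i : ℚ) / (r i : ℚ)) = (z : ℚ) := by
  constructor
  · intro h
    refine ⟨∑ i, a i * (c i / r i), ?_⟩
    push_cast
    refine Finset.sum_congr rfl fun i _ => ?_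
    rcases (hP i).mp (h i) with ⟨d, hd⟩
    rw [hd, Int.mul_ediv_cancel_left _ (hr0 i)]
    have hri : (r i : ℚ) ≠ 0 := Int.cast_ne_zero.mpr (hr0 i)
    push_cast
    field_simp
  · rintro ⟨z, hz⟩ i
    rw [hP i]
    set R : ℤ := ∏ j, r j with hR
    have key : (∑ j, a j * c j * ∏ k ∈ Finset.univ.erase j, r k) = z * R := by
      have hQ : ((∑ j, a j * c j * ∏ k ∈ Finset.univ.erase j, r k : ℤ) : ℚ)
          = ((z * R : ℤ) : ℚ) := by
        push_cast
        rw [← hz, Finset.sum_mul]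
        refine Finset.sum_congr rfl fun j _ => ?_
        have hrj : (r j : ℚ) ≠ 0 := Int.cast_ne_zero.mpr (hr0 j)
        have hsplit : (R : ℚ) = (r j : ℚ) * ∏ k ∈ Finset.univ.erase j, (r k : ℚ) := by
          rw [hR]; push_cast
          exact (Finset.mul_prod_erase _ _ (Finset.mem_univ j)).symm
        push_cast
        rw [hsplit]
        field_simp
      exact_mod_cast hQ
    have hterm : a i * c i * ∏ k ∈ Finset.univ.erase i, r k
        = z * R - ∑ j ∈ Finset.univ.erase i, a j * c j * ∏ k ∈ Finset.univ.erase j, r k := by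
      rw [← key, ← Finset.add_sum_erase _ _ (Finset.mem_univ i)]
      ring
    have h1 : r i ∣ z * R := (Finset.dvd_prod_of_mem r (Finset.mem_univ i)).mul_left z
    have h2 : r i ∣ ∑ j ∈ Finset.univ.erase i, a j * c j * ∏ k ∈ Finset.univ.erase j, r k := by
      refine Finset.dvd_sum fun j hj => ?_
      have hij : i ∈ Finset.univ.erase j := by
        simp [Finset.mem_erase, (Finset.ne_of_mem_erase hj).symm]
      exact (Finset.dvd_prod_of_mem r hij).mul_left _
    have h3 : r i ∣ a i * c i * ∏ k ∈ Finset.univ.erase i, r k := hterm ▸ dvd_sub h1 h2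
    have cop1 : IsCoprime (r i) (a i) :=
      Int.isCoprime_iff_gcd_eq_one.mpr (by rw [Int.gcd_comm]; exact ha i)
    have cop2 : IsCoprime (r i) (∏ k ∈ Finset.univ.erase i, r k) := by
      refine IsCoprime.prod_right fun j hj => ?_
      exact Int.isCoprime_iff_gcd_eq_one.mpr (hr i j (Finset.ne_of_mem_erase hj).symm)
    have h4 : r i ∣ c i * (a i * ∏ k ∈ Finset.univ.erase i, r k) := by
      have : a i * c i * ∏ k ∈ Finset.univ.erase i, r k
          = c i * (a i * ∏ k ∈ Finset.univ.erase i, r k) := by ring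
      rwa [this] at h3
    exact (cop1.mul_right cop2).dvd_of_dvd_mul_right h4
end

section
/- (Simionov's theorem) Let p and k be natural numbers with p ≥ 2 and 1 ≤ k ≤ p. Then p is prime if and only if p divides (p−k)!·(k−1)! − (−1)^k, the expression being interpreted in the integers. -/
lemma simionov_aux (p : ℕ) [Fact p.Prime] :
    ∀ k : ℕ, 1 ≤ k → k ≤ p →
      (((p - k).factorial : ZMod p) * ((k - 1).factorial : ZMod p)) = (-1) ^ k := by
  intro k
  induction k with
  | zero => intro h; omega
  | succ n ih =>
    intro _ hkp
    rcases Nat.eq_or_lt_of_le (Nat.one_le_iff_ne_zero.mpr (by omega) : 1 ≤ n + 1) with h1 | h1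
    · -- n = 0, base case k = 1
      have hn : n = 0 := by omega
      subst hn
      simp [Nat.factorial, ZMod.wilsons_lemma]
    · -- n ≥ 1, use ih
      have hn1 : 1 ≤ n := by omega
      have hnp : n ≤ p := by omega
      have key := ih hn1 hnp
      have hsub : p - n = (p - (n + 1)) + 1 := by omega
      have hfac : ((p - n).factorial : ZMod p)
          = ((p - n : ℕ) : ZMod p) * ((p - (n + 1)).factorial : ZMod p) := by
        rw [hsub, Nat.factorial_succ]
        push_cast
        ring
      have hcast : ((p - n : ℕ) : ZMod p) = -(n : ZMod p) := by
        have : ((p - n : ℕ) : ZMod p) = ((p : ℕ) : ZMod p) - (n : ZMod p) := by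
          have := Nat.cast_sub (by omega : n ≤ p) (R := ZMod p)
          exact this
        rw [this, ZMod.natCast_self]
        ring
      rw [hfac, hcast] at key
      have hk1fac : ((n + 1 - 1).factorial : ZMod p)
          = (n : ZMod p) * ((n - 1).factorial : ZMod p) := by
        have : n + 1 - 1 = (n - 1) + 1 := by omega
        rw [this, Nat.factorial_succ]
        push_cast [Nat.sub_add_cancel hn1]
        ring
      rw [hk1fac]
      linear_combination (-1 : ZMod p) * key

theorem simionov_theorem (p k : ℕ) (hp : 2 ≤ p) (hk1 : 1 ≤ k) (hkp : k ≤ p) :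
    p.Prime ↔
      (p : ℤ) ∣ ((p - k).factorial : ℤ) * ((k - 1).factorial : ℤ) - (-1) ^ k := by
  constructor
  · intro hprime
    haveI : Fact p.Prime := ⟨hprime⟩
    have key := simionov_aux p k hk1 hkp
    have : ((((p - k).factorial : ℤ) * ((k - 1).factorial : ℤ) - (-1) ^ k : ℤ) : ZMod p) = 0 := by
      push_cast
      rw [key]
      ring
    exact (ZMod.intCast_zmod_eq_zero_iff_dvd _ p).mp this
  · intro hdvd
    by_contra hnp
    set q := p.minFac with hq
    have hq2 : 2 ≤ q := (Nat.minFac_prime (by omega)).two_le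
    have hqsq : q * q ≤ p := by
      have := Nat.minFac_sq_le_self (by omega) hnp
      simpa [pow_two] using this
    have h2q : 2 * q ≤ q * q := Nat.mul_le_mul_right q hq2
    have hqdvd : q ∣ p := Nat.minFac_dvd p
    -- q ≤ p - k or q ≤ k - 1
    have hcase : q ≤ p - k ∨ q ≤ k - 1 := by omega
    have hqfac : (q : ℤ) ∣ ((p - k).factorial : ℤ) * ((k - 1).factorial : ℤ) := by
      rcases hcase with h | h
      · exact Dvd.dvd.mul_right (Int.natCast_dvd_natCast.mpr (Nat.dvd_factorial (by omega) h)) _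
      · exact Dvd.dvd.mul_left (Int.natCast_dvd_natCast.mpr (Nat.dvd_factorial (by omega) h)) _
    have hqp : (q : ℤ) ∣ (p : ℤ) := Int.natCast_dvd_natCast.mpr hqdvd
    have : (q : ℤ) ∣ (-1) ^ k := by
      have h1 : (q : ℤ) ∣ ((p - k).factorial : ℤ) * ((k - 1).factorial : ℤ) - (-1) ^ k :=
        hqp.trans hdvd
      exact (dvd_sub_right hqfac).mp h1
    have hunit : IsUnit ((q : ℤ)) := isUnit_of_dvd_unit this (IsUnit.pow k (isUnit_one.neg))
    have : (q : ℤ) = 1 ∨ (q : ℤ) = -1 := Int.isUnit_iff.mp hunit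
    rcases this with h | h <;> omega
end

section
/- Let n ≥ 1, let p₁, …, pₙ be natural numbers, each greater than 1 and pairwise coprime, and let k₁, …, kₙ be natural numbers with 1 ≤ kᵢ ≤ pᵢ for every i. Then p₁, …, pₙ are all prime simultaneously if and only if the product p₁⋯pₙ divides ∑_{i=1}^{n} [(pᵢ−kᵢ)!·(kᵢ−1)! − (−1)^{kᵢ}]·∏_{j≠i} pⱼ, the expression being interpreted in the integers. -/
lemma zmod_fact (p : ℕ) (hp : p.Prime) :
    ∀ q, 1 ≤ q → q ≤ p → (((p - q).factorial : ZMod p) * ((q - 1).factorial : ZMod p)) = (-1) ^ q := by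
  haveI : Fact p.Prime := ⟨hp⟩
  intro q
  induction q with
  | zero => omega
  | succ m ih =>
    intro _ hqp
    rcases Nat.eq_zero_or_pos m with hm | hm
    · subst hm
      simp [ZMod.wilsons_lemma]
    · have hmp : m ≤ p := by omega
      have ihm := ih hm hmp
      have hfac : (p - m).factorial = (p - m) * (p - (m+1)).factorial := by
        have : p - m = (p - (m+1)) + 1 := by omega
        rw [this, Nat.factorial_succ]
      have hcast : ((p - m : ℕ) : ZMod p) = -(m : ZMod p) := by
        rw [Nat.cast_sub hmp]; simp
      rw [hfac] at ihm
      push_cast at ihm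
      rw [hcast] at ihm
      have hk : ((m + 1 - 1).factorial : ZMod p) = (m : ZMod p) * ((m-1).factorial : ZMod p) := by
        have : (m + 1 - 1) = (m - 1) + 1 := by omega
        rw [this, Nat.factorial_succ]
        push_cast
        have : ((m - 1 : ℕ) : ZMod p) + 1 = (m : ZMod p) := by
          have : ((m - 1 : ℕ) + 1 : ℕ) = m := by omega
          calc ((m-1:ℕ):ZMod p) + 1 = (((m-1)+1 : ℕ) : ZMod p) := by push_cast; ring
          _ = (m : ZMod p) := by rw [this]
        rw [this]
      rw [hk, pow_succ]
      have : (m : ZMod p) * ((p - (m+1)).factorial : ZMod p) * ((m-1).factorial : ZMod p) = -(-1)^m := by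
        have := ihm
        linear_combination -this
      calc ((p - (m+1)).factorial : ZMod p) * ((m : ZMod p) * ((m-1).factorial : ZMod p))
          = (m : ZMod p) * ((p - (m+1)).factorial : ZMod p) * ((m-1).factorial : ZMod p) := by ring
        _ = -(-1)^m := this
        _ = (-1)^m * -1 := by ring

lemma key (p q : ℕ) (hp : 1 < p) (hq1 : 1 ≤ q) (hqp : q ≤ p) :
    p.Prime ↔ (p : ℤ) ∣ ((p - q).factorial : ℤ) * ((q - 1).factorial : ℤ) - (-1) ^ q := by
  constructor
  · intro hpp
    have h := zmod_fact p hpp q hq1 hqp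
    have : ((((p - q).factorial : ℤ) * ((q - 1).factorial : ℤ) - (-1) ^ q : ℤ) : ZMod p) = 0 := by
      push_cast
      rw [h]; ring
    exact (ZMod.intCast_zmod_eq_zero_iff_dvd _ _).mp this
  · intro hdvd
    by_contra hnp
    obtain ⟨d, hdp, hd1, hdlt⟩ := (Nat.exists_dvd_of_not_prime2 hp) hnp
    obtain ⟨r, hr, hrd⟩ := Nat.exists_prime_and_dvd (by omega : d ≠ 1)
    have hrp : r ∣ p := hrd.trans hdp
    have hrlt : r ≤ d := Nat.le_of_dvd (by omega) hrd
    have h2r : 2 * r ≤ p := by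
      obtain ⟨e, he⟩ := hdp
      have he2 : 2 ≤ e := by nlinarith [hd1, hdlt, he]
      nlinarith
    have hcase : r ≤ p - q ∨ r ≤ q - 1 := by omega
    have hrfact : (r : ℤ) ∣ ((p - q).factorial : ℤ) * ((q - 1).factorial : ℤ) := by
      rcases hcase with h | h
      · exact Dvd.dvd.mul_right (Int.natCast_dvd_natCast.mpr (Nat.dvd_factorial hr.pos h)) _
      · exact Dvd.dvd.mul_left (Int.natCast_dvd_natCast.mpr (Nat.dvd_factorial hr.pos h)) _
    have hrneg : (r : ℤ) ∣ (-1) ^ q := by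
      have h1 : (r : ℤ) ∣ ((p - q).factorial : ℤ) * ((q - 1).factorial : ℤ) - (-1) ^ q :=
        (Int.natCast_dvd_natCast.mpr hrp).trans hdvd
      have := dvd_sub hrfact h1
      simpa using this
    have : (r : ℤ) ∣ 1 := by
      have h2 := hrneg.mul_left ((-1 : ℤ) ^ q)
      have h3 : ((-1 : ℤ) ^ q) * ((-1 : ℤ) ^ q) = 1 := by
        rw [← pow_add, ← two_mul, pow_mul]; norm_num
      rwa [h3] at h2
    have := Int.le_of_dvd one_pos this
    have := hr.two_le
    omega

theorem simultaneous_primes_prod_dvd (n : ℕ) (hn : 1 ≤ n)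
    (p k : Fin n → ℕ)
    (hp1 : ∀ i, 1 < p i)
    (hcop : ∀ i j, i ≠ j → Nat.Coprime (p i) (p j))
    (hk1 : ∀ i, 1 ≤ k i) (hkp : ∀ i, k i ≤ p i) :
    (∀ i, (p i).Prime) ↔
      (∏ i, (p i : ℤ)) ∣
        ∑ i, (((p i - k i).factorial : ℤ) * ((k i - 1).factorial : ℤ) - (-1) ^ (k i)) *
          ∏ j ∈ Finset.univ.erase i, (p j : ℤ) := by
  set f : Fin n → ℤ := fun i =>
    ((p i - k i).factorial : ℤ) * ((k i - 1).factorial : ℤ) - (-1) ^ (k i) with hf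
  have hkey : ∀ i, (p i).Prime ↔ (p i : ℤ) ∣ f i := fun i =>
    key (p i) (k i) (hp1 i) (hk1 i) (hkp i)
  have hother : ∀ i j : Fin n, i ≠ j →
      (p i : ℤ) ∣ f j * ∏ m ∈ Finset.univ.erase j, (p m : ℤ) := by
    intro i j hij
    exact Dvd.dvd.mul_left
      (Finset.dvd_prod_of_mem _ (Finset.mem_erase.mpr ⟨hij, Finset.mem_univ i⟩)) _
  constructor
  · intro hprime
    have hpair : ((Finset.univ : Finset (Fin n)) : Set (Fin n)).Pairwise
        (Function.onFun IsCoprime fun i => (p i : ℤ)) := by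
      intro i _ j _ hij
      exact (Nat.isCoprime_iff_coprime.mpr (hcop i j hij))
    apply Finset.prod_dvd_of_coprime hpair
    intro i _
    apply Finset.dvd_sum
    intro j _
    rcases eq_or_ne i j with rfl | hij
    · exact Dvd.dvd.mul_right ((hkey i).mp (hprime i)) _
    · exact hother i j hij
  · intro hdvd i
    apply (hkey i).mpr
    have hpi : (p i : ℤ) ∣ ∑ j, f j * ∏ m ∈ Finset.univ.erase j, (p m : ℤ) :=
      (Finset.dvd_prod_of_mem _ (Finset.mem_univ i)).trans hdvd
    have hrest : (p i : ℤ) ∣ ∑ j ∈ Finset.univ.erase i,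
        f j * ∏ m ∈ Finset.univ.erase j, (p m : ℤ) := by
      apply Finset.dvd_sum
      intro j hj
      exact hother i j (Ne.symm (Finset.mem_erase.mp hj).1)
    have hsum : (∑ j, f j * ∏ m ∈ Finset.univ.erase j, (p m : ℤ)) =
        f i * (∏ m ∈ Finset.univ.erase i, (p m : ℤ)) +
        ∑ j ∈ Finset.univ.erase i, f j * ∏ m ∈ Finset.univ.erase j, (p m : ℤ) :=
      (Finset.add_sum_erase _ _ (Finset.mem_univ i)).symm
    have hterm : (p i : ℤ) ∣ f i * ∏ m ∈ Finset.univ.erase i, (p m : ℤ) := by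
      have := dvd_sub hpi hrest
      rwa [hsum, add_sub_cancel_right] at this
    have hcopr : IsCoprime ((p i : ℤ)) (∏ m ∈ Finset.univ.erase i, (p m : ℤ)) := by
      apply IsCoprime.prod_right
      intro j hj
      exact Nat.isCoprime_iff_coprime.mpr (hcop i j (Ne.symm (Finset.mem_erase.mp hj).1))
    exact hcopr.dvd_of_dvd_mul_right hterm
end

section
/- Let n ≥ 1, let p₁, …, pₙ be natural numbers, each greater than 1 and pairwise coprime, and let k₁, …, kₙ be natural numbers with 1 ≤ kᵢ ≤ pᵢ for every i. Then p₁, …, pₙ are all prime simultaneously if and only if the rational number ∑_{i=1}^{n} [(pᵢ−kᵢ)!·(kᵢ−1)! − (−1)^{kᵢ}]/pᵢ is an integer. -/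
lemma wilson_gen {p : ℕ} (hp : p.Prime) : ∀ k, 1 ≤ k → k ≤ p →
    (((p - k).factorial : ZMod p) * ((k - 1).factorial : ZMod p)) = (-1) ^ k := by
  haveI := Fact.mk hp
  intro k
  induction k with
  | zero => omega
  | succ k ih =>
    intro _ hkp
    rcases Nat.eq_zero_or_pos k with rfl | hk
    · simpa using ZMod.wilsons_lemma p
    · have ih' := ih hk (by omega)
      have h1 : (p - k).factorial = (p - k) * (p - (k + 1)).factorial := by
        rw [show p - k = (p - (k+1)) + 1 from by omega, Nat.factorial_succ]
      have h2 : k.factorial = k * (k - 1).factorial := by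
        conv_lhs => rw [show k = (k-1) + 1 from by omega, Nat.factorial_succ]
        rw [show k - 1 + 1 = k from by omega]
      have hc : ((p - k : ℕ) : ZMod p) = -(k : ZMod p) := by
        rw [Nat.cast_sub (by omega)]; simp
      rw [h1] at ih'
      push_cast at ih' ⊢
      rw [hc] at ih'
      rw [h2]
      push_cast
      ring_nf
      ring_nf at ih'
      linear_combination -ih'

lemma comp_not_dvd {p k : ℕ} (hp1 : 1 < p) (hnp : ¬ p.Prime) (hk1 : 1 ≤ k) (hkp : k ≤ p) :
    ¬ ((p : ℤ) ∣ (((p - k).factorial : ℤ) * ((k - 1).factorial : ℤ) - (-1) ^ k)) := by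
  intro hdvd
  set q := p.minFac with hqdef
  have hq : q.Prime := Nat.minFac_prime (by omega)
  have hqp : q ∣ p := Nat.minFac_dvd p
  have hq2 : 2 ≤ q := hq.two_le
  have h2q : 2 * q ≤ p := by
    obtain ⟨m, hm⟩ := hqp
    have hm2 : 2 ≤ m := by
      rcases Nat.lt_or_ge m 2 with h | h
      · interval_cases m
        · omega
        · simp at hm; exact absurd (hm ▸ hq) hnp
      · exact h
    have hqm : q ≤ m := Nat.minFac_le_of_dvd hm2 (hm ▸ dvd_mul_left m q)
    nlinarith
  have hqfac : (q : ℤ) ∣ ((p - k).factorial : ℤ) * ((k - 1).factorial : ℤ) := by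
    rcases Nat.lt_or_ge (p - k) q with h | h
    · have : q ≤ k - 1 := by omega
      exact Dvd.dvd.mul_left (Int.natCast_dvd_natCast.mpr
        (Nat.dvd_factorial hq.pos this)) _
    · exact Dvd.dvd.mul_right (Int.natCast_dvd_natCast.mpr
        (Nat.dvd_factorial hq.pos h)) _
  have hqe : (q : ℤ) ∣ (((p - k).factorial : ℤ) * ((k - 1).factorial : ℤ) - (-1) ^ k) :=
    dvd_trans (Int.natCast_dvd_natCast.mpr hqp) hdvd
  have hone : (q : ℤ) ∣ (-1) ^ k := (dvd_sub_right hqfac).mp hqe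
  have : IsUnit (q : ℤ) := isUnit_of_dvd_unit hone ((IsUnit.neg isUnit_one).pow k)
  rcases Int.isUnit_iff.mp this with h | h <;> omega

theorem simultaneous_primes_rat_sum_int (n : ℕ) (hn : 1 ≤ n)
    (p k : Fin n → ℕ)
    (hp1 : ∀ i, 1 < p i)
    (hcop : ∀ i j, i ≠ j → Nat.Coprime (p i) (p j))
    (hk1 : ∀ i, 1 ≤ k i) (hkp : ∀ i, k i ≤ p i) :
    (∀ i, (p i).Prime) ↔
      ∃ z : ℤ,
        (∑ i, (((p i - k i).factorial : ℚ) * ((k i - 1).factorial : ℚ) - (-1) ^ (k i)) /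
          (p i : ℚ)) = (z : ℚ) := by
  set a : Fin n → ℤ :=
    fun i => ((p i - k i).factorial : ℤ) * ((k i - 1).factorial : ℤ) - (-1) ^ (k i) with ha
  have hcast : ∀ i : Fin n, ((a i : ℚ)) =
      (((p i - k i).factorial : ℚ) * ((k i - 1).factorial : ℚ) - (-1) ^ (k i)) := by
    intro i; rw [ha]; push_cast; ring
  simp only [← hcast]
  have hP0 : ∀ j, (p j : ℚ) ≠ 0 := fun j => by
    have := hp1 j; positivity
  constructor
  · intro hpr
    refine ⟨∑ i, a i / (p i : ℤ), ?_⟩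
    have hdvd : ∀ i, (p i : ℤ) ∣ a i := by
      intro i
      have hw := wilson_gen (hpr i) (k i) (hk1 i) (hkp i)
      have h0 : ((a i : ZMod (p i))) = 0 := by
        rw [ha]; push_cast; rw [hw]; ring
      exact (ZMod.intCast_zmod_eq_zero_iff_dvd _ _).mp h0
    rw [Int.cast_sum]
    refine Finset.sum_congr rfl fun i _ => ?_
    rw [Int.cast_div_charZero (hdvd i)]
    norm_cast
  · rintro ⟨z, hz⟩ i
    by_contra hnpr
    have hQ : ∑ j, (a j : ℚ) * ∏ l ∈ Finset.univ.erase j, (p l : ℚ)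
        = (z : ℚ) * ∏ l, (p l : ℚ) := by
      have h := congrArg (· * ∏ l, (p l : ℚ)) hz
      simp only [Finset.sum_mul] at h
      rw [← h]
      refine Finset.sum_congr rfl fun j _ => ?_
      rw [← Finset.mul_prod_erase Finset.univ _ (Finset.mem_univ j)]
      rw [div_mul_eq_mul_div, mul_comm ((p j : ℚ)) _, ← mul_assoc, mul_div_assoc,
        div_self (hP0 j), mul_one]
    have hZ : ∑ j, a j * ∏ l ∈ Finset.univ.erase j, (p l : ℤ)
        = z * ∏ l, (p l : ℤ) := by exact_mod_cast hQ
    have h1 : (p i : ℤ) ∣ z * ∏ l, (p l : ℤ) :=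
      Dvd.dvd.mul_left (Finset.dvd_prod_of_mem _ (Finset.mem_univ i)) z
    have h2 : (p i : ℤ) ∣ ∑ j ∈ Finset.univ.erase i,
        a j * ∏ l ∈ Finset.univ.erase j, (p l : ℤ) :=
      Finset.dvd_sum fun j hj => Dvd.dvd.mul_left
        (Finset.dvd_prod_of_mem _
          (Finset.mem_erase.mpr ⟨(Finset.ne_of_mem_erase hj).symm, Finset.mem_univ i⟩)) _
    have h3 : a i * ∏ l ∈ Finset.univ.erase i, (p l : ℤ)
        = z * ∏ l, (p l : ℤ) - ∑ j ∈ Finset.univ.erase i,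
          a j * ∏ l ∈ Finset.univ.erase j, (p l : ℤ) := by
      rw [← hZ, ← Finset.add_sum_erase _ _ (Finset.mem_univ i)]; ring
    have h4 : (p i : ℤ) ∣ a i * ∏ l ∈ Finset.univ.erase i, (p l : ℤ) :=
      h3 ▸ dvd_sub h1 h2
    have hc : IsCoprime ((p i : ℕ) : ℤ) ((∏ l ∈ Finset.univ.erase i, p l : ℕ) : ℤ) :=
      Nat.isCoprime_iff_coprime.mpr
        (Nat.Coprime.prod_right fun j hj => hcop i j (Finset.ne_of_mem_erase hj).symm)
    push_cast at hc
    have hdvd : (p i : ℤ) ∣ a i := hc.dvd_of_dvd_mul_right h4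
    exact comp_not_dvd (hp1 i) hnpr (hk1 i) (hkp i) hdvd
end

section
/- Let p be an odd natural number with p > 1. Then p and p+2 are both prime if and only if p·(p+2) divides (p−1)!·(3p+2) + 2p + 2, the expression being interpreted in the integers. -/
theorem twin_primes_char_one (p : ℕ) (hodd : Odd p) (hp : 1 < p) :
    (p.Prime ∧ (p + 2).Prime) ↔
      ((p : ℤ) * ((p : ℤ) + 2)) ∣
        ((p - 1).factorial : ℤ) * (3 * (p : ℤ) + 2) + 2 * (p : ℤ) + 2 := by
  set E : ℤ := ((p - 1).factorial : ℤ) * (3 * (p : ℤ) + 2) + 2 * (p : ℤ) + 2 with hE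
  have hq : Odd (p + 2) := hodd.add_even even_two
  have hcop : Nat.Coprime p (p + 2) := by
    have : Nat.Coprime p 2 := Nat.coprime_two_right.mpr hodd
    simpa [Nat.add_comm] using (Nat.coprime_add_self_right (m := p) (n := 2)).mpr this
  have hcopZ : IsCoprime (p : ℤ) ((p : ℤ) + 2) := by
    have := Nat.isCoprime_iff_coprime.mpr hcop
    push_cast at this ⊢
    exact this
  -- units
  have h2p : IsUnit (2 : ZMod p) := by
    have := (ZMod.isUnit_iff_coprime 2 p).mpr
      (Nat.coprime_two_left.mpr hodd)
    simpa using this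
  have h2q : IsUnit (2 : ZMod (p + 2)) := by
    have := (ZMod.isUnit_iff_coprime 2 (p + 2)).mpr
      (Nat.coprime_two_left.mpr hq)
    simpa using this
  -- mod p condition
  have hmodp : ((p : ℤ) ∣ E) ↔ (((p - 1).factorial : ZMod p) = -1) := by
    rw [← ZMod.intCast_zmod_eq_zero_iff_dvd]
    have hp0 : ((p : ℤ) : ZMod p) = 0 := by
      simpa using (ZMod.natCast_self p)
    have : ((E : ZMod p)) = 2 * (((p - 1).factorial : ZMod p) + 1) := by
      rw [hE]
      push_cast
      rw [show ((p : ℕ) : ZMod p) = 0 from ZMod.natCast_self p]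
      ring
    rw [this, h2p.mul_right_eq_zero]
    constructor
    · intro h; linear_combination h
    · intro h; rw [h]; ring
  -- mod p+2 condition
  have hfac : ((p + 1).factorial : ZMod (p + 2)) = 2 * ((p - 1).factorial : ZMod (p + 2)) := by
    have h1 : (p + 1).factorial = (p + 1) * (p * (p - 1).factorial) := by
      rw [Nat.factorial_succ, ← Nat.mul_factorial_pred (by omega : p ≠ 0)]
    have hq0 : ((p : ZMod (p + 2))) = -2 := by
      have : ((p + 2 : ℕ) : ZMod (p + 2)) = 0 := ZMod.natCast_self _
      push_cast at this
      linear_combination this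
    rw [h1]
    push_cast
    rw [hq0]
    ring
  have hmodq : (((p : ℤ) + 2) ∣ E) ↔ (((p + 1).factorial : ZMod (p + 2)) = -1) := by
    have : ((p : ℤ) + 2) = ((p + 2 : ℕ) : ℤ) := by push_cast; ring
    rw [this, ← ZMod.intCast_zmod_eq_zero_iff_dvd]
    have hq0 : ((p : ZMod (p + 2))) = -2 := by
      have : ((p + 2 : ℕ) : ZMod (p + 2)) = 0 := ZMod.natCast_self _
      push_cast at this
      linear_combination this
    have hE' : ((E : ZMod (p + 2))) = (-2) * (((p + 1).factorial : ZMod (p + 2)) + 1) := by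
      rw [hE, hfac]
      push_cast
      rw [hq0]
      ring
    have hneg2 : IsUnit (-2 : ZMod (p + 2)) := h2q.neg
    rw [hE', hneg2.mul_right_eq_zero]
    constructor
    · intro h; linear_combination h
    · intro h; rw [h]; ring
  have hwp : p.Prime ↔ (((p - 1).factorial : ZMod p) = -1) :=
    Nat.prime_iff_fac_equiv_neg_one (by omega)
  have hwq : (p + 2).Prime ↔ (((p + 1).factorial : ZMod (p + 2)) = -1) := by
    have := Nat.prime_iff_fac_equiv_neg_one (n := p + 2) (by omega)
    simpa [Nat.add_sub_cancel] using this
  constructor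
  · rintro ⟨h1, h2⟩
    exact hcopZ.mul_dvd (hmodp.mpr (hwp.mp h1)) (hmodq.mpr (hwq.mp h2))
  · intro h
    refine ⟨hwp.mpr (hmodp.mp (dvd_trans (dvd_mul_right _ _) h)),
      hwq.mpr (hmodq.mp (dvd_trans (dvd_mul_left _ _) h))⟩
end

section
/- Let p be an odd natural number with p > 1. Then p and p+2 are both prime if and only if p·(p+2) divides (p−1)!·(p−2) − 2, the expression being interpreted in the integers. -/
lemma wilson_int_aux (n : ℕ) (hn : 1 < n) :
    n.Prime ↔ (n : ℤ) ∣ ((n - 1).factorial : ℤ) + 1 := by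
  rw [Nat.prime_iff_fac_equiv_neg_one (by omega), ← ZMod.intCast_zmod_eq_zero_iff_dvd]
  push_cast
  constructor
  · intro h; rw [h]; ring
  · intro h; exact eq_neg_of_add_eq_zero_left h

theorem twin_primes_char_two (p : ℕ) (hodd : Odd p) (hp : 1 < p) :
    (p.Prime ∧ (p + 2).Prime) ↔
      ((p : ℤ) * ((p : ℤ) + 2)) ∣ ((p - 1).factorial : ℤ) * ((p : ℤ) - 2) - 2 := by
  have hp3 : 3 ≤ p := by
    rcases hodd with ⟨k, hk⟩; omega
  set f : ℤ := ((p - 1).factorial : ℤ) with hf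
  set P : ℤ := (p : ℤ) with hP
  have hfact : (((p + 1).factorial : ℕ) : ℤ) = (P + 1) * P * f := by
    have h1 : (p + 1).factorial = (p + 1) * (p * (p - 1).factorial) := by
      rw [Nat.factorial_succ, Nat.mul_factorial_pred (by omega)]
    rw [h1]; push_cast; ring
  -- oddness facts
  have hpodd : ¬ (2 : ℤ) ∣ P := by
    rcases hodd with ⟨k, hk⟩
    rw [hP, hk]; push_cast; omega
  have hqodd : ¬ (2 : ℤ) ∣ (P + 2) := by
    rcases hodd with ⟨k, hk⟩
    rw [hP, hk]; push_cast; omega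
  have hcop2p : IsCoprime (2 : ℤ) P := (Int.prime_two.coprime_iff_not_dvd).2 hpodd
  have hcop2q : IsCoprime (2 : ℤ) (P + 2) := (Int.prime_two.coprime_iff_not_dvd).2 hqodd
  have hcoppq : IsCoprime P (P + 2) := by
    have := (hcop2p.symm).add_mul_right_right 1
    simpa [mul_one, add_comm] using this
  -- Wilson for p and p+2
  have hwp : p.Prime ↔ P ∣ f + 1 := wilson_int_aux p hp
  have hwq : (p + 2).Prime ↔ (P + 2) ∣ (P + 1) * P * f + 1 := by
    have := wilson_int_aux (p + 2) (by omega)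
    have h1 : ((p + 2) - 1) = p + 1 := by omega
    rw [h1] at this
    rw [this, hfact]
    push_cast
    constructor <;> intro h <;> convert h using 2
  set W : ℤ := (P + 1) * P * f + 1 with hW
  set E : ℤ := f * (P - 2) - 2 with hE
  have key : 2 * E = W * (P - 2) - (P + 2) * ((P - 1) * f * (P - 2) + 1) := by
    rw [hW, hE]; ring
  constructor
  · rintro ⟨h1, h2⟩
    have hdp : P ∣ E := by
      have h := hwp.1 h1
      have : E = (f + 1) * (P - 2) - P := by rw [hE]; ring
      rw [this]
      exact dvd_sub (h.mul_right _) dvd_rfl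
    have hdq : (P + 2) ∣ E := by
      have h := hwq.1 h2
      have h2E : (P + 2) ∣ 2 * E := by
        rw [key]
        exact dvd_sub (h.mul_right _) (dvd_mul_right _ _)
      exact hcop2q.symm.dvd_of_dvd_mul_left h2E
    exact hcoppq.mul_dvd hdp hdq
  · intro h
    have hdp : P ∣ E := dvd_trans (dvd_mul_right _ _) h
    have hdq : (P + 2) ∣ E := dvd_trans (dvd_mul_left _ _) h
    constructor
    · apply hwp.2
      have h1 : P ∣ (f + 1) * (P - 2) := by
        have : (f + 1) * (P - 2) = E + P := by rw [hE]; ring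
        rw [this]; exact dvd_add hdp dvd_rfl
      have h2 : P ∣ 2 * (f + 1) := by
        have : 2 * (f + 1) = (f + 1) * P - (f + 1) * (P - 2) := by ring
        rw [this]
        exact dvd_sub (dvd_mul_left _ _) h1
      exact hcop2p.symm.dvd_of_dvd_mul_left h2
    · apply hwq.2
      have h1 : (P + 2) ∣ W * (P - 2) := by
        have : W * (P - 2) = 2 * E + (P + 2) * ((P - 1) * f * (P - 2) + 1) := by
          rw [key]; ring
        rw [this]
        exact dvd_add (hdq.mul_left 2) (dvd_mul_right _ _)
      have h2 : (P + 2) ∣ 2 * (2 * W) := by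
        have : 2 * (2 * W) = W * (P + 2) - W * (P - 2) := by ring
        rw [this]
        exact dvd_sub (dvd_mul_left _ _) h1
      exact hcop2q.symm.dvd_of_dvd_mul_left (hcop2q.symm.dvd_of_dvd_mul_left h2)
end

section
/- Let p be an odd natural number with p > 1. Then p and p+2 are both prime if and only if the rational number ((p−1)! + 1)/p + (2·(p−1)! + 1)/(p+2) is an integer. -/
theorem twin_primes_char_rat (p : ℕ) (hodd : Odd p) (hp : 1 < p) :
    (p.Prime ∧ (p + 2).Prime) ↔
      ∃ z : ℤ,
        (((p - 1).factorial : ℚ) + 1) / (p : ℚ) +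
          (2 * ((p - 1).factorial : ℚ) + 1) / ((p : ℚ) + 2) = (z : ℚ) := by
  haveI : NeZero p := ⟨by omega⟩
  haveI : NeZero (p + 2) := ⟨by omega⟩
  set F : ℕ := (p - 1).factorial with hF
  have hpQ : (p : ℚ) ≠ 0 := by positivity
  have hp2Q : (p : ℚ) + 2 ≠ 0 := by positivity
  -- 2 is a unit mod p and mod p+2
  have hu1 : IsUnit (2 : ZMod p) := by
    rw [show ((2 : ZMod p)) = ((2 : ℕ) : ZMod p) by push_cast; ring,
      ZMod.isUnit_iff_coprime]
    rw [Nat.coprime_two_left]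
    exact hodd
  have hu2 : IsUnit (2 : ZMod (p + 2)) := by
    rw [show ((2 : ZMod (p+2))) = ((2 : ℕ) : ZMod (p+2)) by push_cast; ring,
      ZMod.isUnit_iff_coprime, Nat.coprime_two_left]
    rcases hodd with ⟨k, hk⟩
    exact ⟨k+1, by omega⟩
  -- factorial identity : (p+1)! = (p+1) * p * F
  have hfac : (p + 1).factorial = (p + 1) * (p * F) := by
    rw [Nat.factorial_succ]
    congr 1
    conv_lhs => rw [show p = (p - 1) + 1 by omega]
    rw [Nat.factorial_succ]
    congr 1
    omega
  -- cast of p in ZMod (p+2) is -2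
  have hpcast : ((p : ℕ) : ZMod (p + 2)) = -2 := by
    have h0 : ((p + 2 : ℕ) : ZMod (p + 2)) = 0 := ZMod.natCast_self _
    push_cast at h0
    linear_combination h0
  -- Wilson characterizations
  have w1 : p.Prime ↔ ((F : ZMod p) + 1 = 0) := by
    rw [Nat.prime_iff_fac_equiv_neg_one (by omega)]
    constructor
    · intro h; rw [h]; ring
    · intro h; linear_combination h
  have w2 : (p + 2).Prime ↔ ((2 * F : ZMod (p + 2)) + 1 = 0) := by
    rw [Nat.prime_iff_fac_equiv_neg_one (by omega)]
    have : ((p + 2 - 1).factorial : ZMod (p + 2)) = 2 * (F : ZMod (p + 2)) := by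
      have : p + 2 - 1 = p + 1 := by omega
      rw [this, hfac]
      push_cast [hpcast]
      ring
    rw [this]
    constructor
    · intro h; rw [h]; ring
    · intro h; linear_combination h
  rw [w1, w2]
  constructor
  · rintro ⟨h1, h2⟩
    -- divisibilities in ℕ
    have d1 : p ∣ F + 1 := by
      rw [← ZMod.natCast_eq_zero_iff]
      push_cast
      exact h1
    have d2 : (p + 2) ∣ 2 * F + 1 := by
      rw [← ZMod.natCast_eq_zero_iff]
      push_cast
      exact h2
    obtain ⟨a, ha⟩ := d1
    obtain ⟨b, hb⟩ := d2
    refine ⟨(a : ℤ) + b, ?_⟩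
    have ha' : (F : ℚ) + 1 = p * a := by exact_mod_cast congrArg (Nat.cast : ℕ → ℚ) ha
    have hb' : 2 * (F : ℚ) + 1 = (p + 2) * b := by
      exact_mod_cast congrArg (Nat.cast : ℕ → ℚ) hb
    field_simp
    push_cast
    linear_combination ((p : ℚ) + 2) * ha' + (p : ℚ) * hb'
  · rintro ⟨z, hz⟩
    have hz' : ((F : ℚ) + 1) * (p + 2) + (2 * F + 1) * p = z * (p * (p + 2)) := by
      field_simp at hz
      linear_combination hz
    have hzZ : ((F : ℤ) + 1) * (p + 2) + (2 * F + 1) * p = z * (p * (p + 2)) := by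
      exact_mod_cast hz'
    constructor
    · have := congrArg (Int.cast : ℤ → ZMod p) hzZ
      push_cast at this
      rw [ZMod.natCast_self] at this
      have h2 : (2 : ZMod p) * ((F : ZMod p) + 1) = 0 := by linear_combination this
      have := hu1.mul_right_eq_zero.mp h2
      exact this
    · have := congrArg (Int.cast : ℤ → ZMod (p + 2)) hzZ
      push_cast [hpcast] at this
      have h2 : (2 : ZMod (p + 2)) * ((2 * F : ZMod (p + 2)) + 1) = 0 := by
        linear_combination -this
      have := hu2.mul_right_eq_zero.mp h2
      linear_combination this
end

section
/- (Cucurezeanu's theorem) Let p and k be natural numbers with p > 1, k ≥ 1, and p coprime to k!. Then p and p+k are both prime if and only if p·(p+k) divides k·k!·((p−1)! + 1) + (k! − (−1)^k)·p, the expression being interpreted in the integers. -/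
theorem cucurezeanu_theorem (p k : ℕ) (hp : 1 < p) (hk : 1 ≤ k)
    (hcop : Nat.Coprime p (Nat.factorial k)) :
    (p.Prime ∧ (p + k).Prime) ↔
      ((p : ℤ) * ((p : ℤ) + k)) ∣
        (k : ℤ) * (k.factorial : ℤ) * (((p - 1).factorial : ℤ) + 1) +
          ((k.factorial : ℤ) - (-1) ^ k) * (p : ℤ) := by
  set q := p + k with hq
  set E : ℤ := (k : ℤ) * (k.factorial : ℤ) * (((p - 1).factorial : ℤ) + 1) +
      ((k.factorial : ℤ) - (-1) ^ k) * (p : ℤ) with hE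
  have hq1 : 1 < q := lt_of_lt_of_le hp (Nat.le_add_right p k)
  have hcopk : Nat.Coprime p k := hcop.coprime_dvd_right (Nat.dvd_factorial hk le_rfl)
  have hcoppq : Nat.Coprime p q := by
    rw [hq, Nat.add_comm, Nat.coprime_add_self_right]; exact hcopk
  have hqcast : ((p : ℤ) + k) = (q : ℤ) := by rw [hq]; push_cast; ring
  haveI : NeZero p := ⟨by omega⟩
  haveI : NeZero q := ⟨by omega⟩
  -- p part
  have h1 : ((p : ℤ) ∣ E) ↔ p.Prime := by
    rw [← ZMod.intCast_zmod_eq_zero_iff_dvd]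
    have hcast : ((E : ℤ) : ZMod p) =
        ((k : ZMod p) * ((k.factorial : ℕ) : ZMod p)) * (((p - 1).factorial : ZMod p) + 1) := by
      rw [hE]; push_cast [ZMod.natCast_self]; ring
    have hu : IsUnit ((k : ZMod p) * ((k.factorial : ℕ) : ZMod p)) := by
      exact ((ZMod.isUnit_iff_coprime k p).mpr hcopk.symm).mul
        ((ZMod.isUnit_iff_coprime k.factorial p).mpr hcop.symm)
    rw [hcast, IsUnit.mul_right_eq_zero hu, add_eq_zero_iff_eq_neg,
      ← Nat.prime_iff_fac_equiv_neg_one (by omega : p ≠ 1)]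
  -- q part
  have hkq : Nat.Coprime k q := by
    rw [hq, Nat.coprime_add_self_right]; exact hcopk.symm
  have hdesc : (((q - 1).descFactorial k : ℕ) : ZMod q) = (-1) ^ k * (k.factorial : ℕ) :=
    ZMod.cast_descFactorial (by omega : k ≤ q)
  have hfacN : ((p - 1).factorial) * ((q - 1).descFactorial k) = (q - 1).factorial := by
    have h := Nat.factorial_mul_descFactorial (show k ≤ q - 1 by omega)
    rwa [show q - 1 - k = p - 1 by omega] at h
  have key : (((q - 1).factorial : ℕ) : ZMod q) =
      (((p - 1).factorial : ℕ) : ZMod q) * ((-1) ^ k * (k.factorial : ℕ)) := by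
    rw [← hfacN]; push_cast [hdesc]; ring
  have hpq : (p : ZMod q) = -(k : ZMod q) := by
    have h0 : ((p : ZMod q) + (k : ZMod q)) = 0 := by
      rw [← Nat.cast_add, ← hq, ZMod.natCast_self]
    exact eq_neg_of_add_eq_zero_left h0
  have h2k : ((-1 : ZMod q)) ^ (k * 2) = 1 := by
    rw [pow_mul', neg_one_sq, one_pow]
  have h2 : ((q : ℤ) ∣ E) ↔ q.Prime := by
    rw [← ZMod.intCast_zmod_eq_zero_iff_dvd]
    have hcast : ((E : ℤ) : ZMod q) =
        ((-1 : ZMod q) ^ k * (k : ZMod q)) * ((((q - 1).factorial : ℕ) : ZMod q) + 1) := by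
      rw [hE]; push_cast
      rw [hpq, key]
      linear_combination (-(k : ZMod q) * ((k.factorial : ℕ) : ZMod q) *
        (((p - 1).factorial : ℕ) : ZMod q)) * h2k
    have hu : IsUnit ((-1 : ZMod q) ^ k * (k : ZMod q)) :=
      ((IsUnit.neg isUnit_one).pow k).mul ((ZMod.isUnit_iff_coprime k q).mpr hkq)
    rw [hcast, IsUnit.mul_right_eq_zero hu, add_eq_zero_iff_eq_neg,
      ← Nat.prime_iff_fac_equiv_neg_one (by omega : q ≠ 1)]
  rw [hqcast]
  constructor
  · rintro ⟨hpp, hqq⟩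
    exact (Nat.isCoprime_iff_coprime.mpr hcoppq).mul_dvd (h1.mpr hpp) (h2.mpr hqq)
  · intro h
    exact ⟨h1.mp ((dvd_mul_right _ _).trans h), h2.mp ((dvd_mul_left _ _).trans h)⟩
end

section
/- Let p be a natural number with p > 3 such that the three numbers p−2, p, p+4 are pairwise coprime. Then p−2, p, p+4 are all prime simultaneously if and only if the rational number (p−1)! + 1 + p·((p−3)! + 1)/(p−2) + p·((p+3)! + 1)/(p+4) is an integer divisible by p (i.e., it equals p·m for some integer m). -/
lemma wilson_int {n : ℕ} (hn : 1 < n) :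
    n.Prime ↔ (n : ℤ) ∣ ((n - 1).factorial : ℤ) + 1 := by
  rw [Nat.prime_iff_fac_equiv_neg_one (by omega : n ≠ 1),
    ← ZMod.intCast_zmod_eq_zero_iff_dvd]
  push_cast
  rw [eq_neg_iff_add_eq_zero]

theorem patrizio_type_char (p : ℕ) (hp : 3 < p)
    (h1 : Nat.Coprime (p - 2) p) (h2 : Nat.Coprime (p - 2) (p + 4))
    (h3 : Nat.Coprime p (p + 4)) :
    ((p - 2).Prime ∧ p.Prime ∧ (p + 4).Prime) ↔
      ∃ m : ℤ,
        ((p - 1).factorial : ℚ) + 1 +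
          (p : ℚ) * (((p - 3).factorial : ℚ) + 1) / ((p : ℚ) - 2) +
          (p : ℚ) * (((p + 3).factorial : ℚ) + 1) / ((p : ℚ) + 4) = (p : ℚ) * (m : ℚ) := by
  obtain ⟨a, rfl⟩ : ∃ a, p = a + 4 := ⟨p - 4, by omega⟩
  rw [show a + 4 - 2 = a + 2 from by omega, show a + 4 - 3 = a + 1 from by omega,
    show a + 4 - 1 = a + 3 from by omega] at *
  rw [show a + 4 + 4 = a + 8 from by omega] at h2 h3 ⊢
  rw [show a + 4 + 3 = a + 7 from by omega]
  -- integer abbreviations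
  set q1 : ℤ := (a : ℤ) + 2 with hq1
  set q2 : ℤ := (a : ℤ) + 4 with hq2
  set q3 : ℤ := (a : ℤ) + 8 with hq3
  set A : ℤ := ((a + 3).factorial : ℤ) + 1 with hA
  set B : ℤ := ((a + 1).factorial : ℤ) + 1 with hB
  set C : ℤ := ((a + 7).factorial : ℤ) + 1 with hC
  set N : ℤ := q1 * q3 * A + q2 * q3 * B + q2 * q1 * C with hN
  -- coprimality in ℤ
  have c12 : IsCoprime q1 q2 := by
    have := Nat.isCoprime_iff_coprime.mpr h1; push_cast at this; exact this
  have c13 : IsCoprime q1 q3 := by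
    have := Nat.isCoprime_iff_coprime.mpr h2; push_cast at this; exact this
  have c23 : IsCoprime q2 q3 := by
    have := Nat.isCoprime_iff_coprime.mpr h3; push_cast at this; exact this
  have cop1 : IsCoprime q1 (q2 * q3) := c12.mul_right c13
  have cop2 : IsCoprime q2 (q1 * q3) := c12.symm.mul_right c23
  have cop3 : IsCoprime q3 (q2 * q1) := c23.symm.mul_right c13.symm
  have hne1 : ((a : ℚ) + 2) ≠ 0 := by positivity
  have hne3 : ((a : ℚ) + 8) ≠ 0 := by positivity
  have expand : ((N : ℤ) : ℚ) = ((a : ℚ) + 2) * ((a : ℚ) + 8) *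
      ((((a + 3).factorial : ℚ)) + 1 +
      ((a + 4 : ℕ) : ℚ) * (((a + 1).factorial : ℚ) + 1) / (((a + 4 : ℕ) : ℚ) - 2) +
      ((a + 4 : ℕ) : ℚ) * (((a + 7).factorial : ℚ) + 1) / (((a + 4 : ℕ) : ℚ) + 4)) := by
    rw [hN, hq1, hq2, hq3, hA, hB, hC]
    push_cast
    rw [show ((a : ℚ) + 4 - 2) = (a : ℚ) + 2 from by ring,
      show ((a : ℚ) + 4 + 4) = (a : ℚ) + 8 from by ring]
    field_simp
  have key : (∃ m : ℤ,
        (((a + 3).factorial : ℚ)) + 1 +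
          ((a + 4 : ℕ) : ℚ) * (((a + 1).factorial : ℚ) + 1) / (((a + 4 : ℕ) : ℚ) - 2) +
          ((a + 4 : ℕ) : ℚ) * (((a + 7).factorial : ℚ) + 1) / (((a + 4 : ℕ) : ℚ) + 4)
          = ((a + 4 : ℕ) : ℚ) * (m : ℚ)) ↔ q2 * (q1 * q3) ∣ N := by
    constructor
    · rintro ⟨m, hm⟩
      refine ⟨m, ?_⟩
      rw [hm] at expand
      have : ((N : ℤ) : ℚ) = ((q2 * (q1 * q3) * m : ℤ) : ℚ) := by
        rw [expand, hq1, hq2, hq3]; push_cast; ring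
      exact_mod_cast this
    · rintro ⟨m, hm⟩
      refine ⟨m, ?_⟩
      apply mul_left_cancel₀ (mul_ne_zero hne1 hne3)
      rw [← expand, hm, hq1, hq2, hq3]
      push_cast
      ring
  rw [key]
  -- primality ↔ divisibility
  have w1 : (a + 2).Prime ↔ q1 ∣ B := by
    rw [wilson_int (by omega : 1 < a + 2), show a + 2 - 1 = a + 1 from by omega,
      hq1, hB]; push_cast; rfl
  have w2 : (a + 4).Prime ↔ q2 ∣ A := by
    rw [wilson_int (by omega : 1 < a + 4), show a + 4 - 1 = a + 3 from by omega,
      hq2, hA]; push_cast; rfl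
  have w3 : (a + 8).Prime ↔ q3 ∣ C := by
    rw [wilson_int (by omega : 1 < a + 8), show a + 8 - 1 = a + 7 from by omega,
      hq3, hC]; push_cast; rfl
  rw [w1, w2, w3]
  constructor
  · rintro ⟨d1, d2, d3⟩
    refine cop2.mul_dvd ?_ (c13.mul_dvd ?_ ?_)
    · rw [hN]
      exact dvd_add (dvd_add (d2.mul_left _) ((dvd_mul_right q2 q3).mul_right B))
        ((dvd_mul_right q2 q1).mul_right C)
    · rw [hN]
      exact dvd_add (dvd_add ((dvd_mul_right q1 q3).mul_right A) (d1.mul_left _))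
        (((dvd_mul_left q1 q2).mul_right C))
    · rw [hN]
      exact dvd_add (dvd_add ((dvd_mul_left q3 q1).mul_right A)
        ((dvd_mul_left q3 q2).mul_right B)) (d3.mul_left _)
  · intro h
    have dN2 : q2 ∣ N := dvd_trans (dvd_mul_right q2 (q1 * q3)) h
    have dN1 : q1 ∣ N := dvd_trans ((dvd_mul_right q1 q3).mul_left q2) h
    have dN3 : q3 ∣ N := dvd_trans ((dvd_mul_left q3 q1).mul_left q2) h
    refine ⟨?_, ?_, ?_⟩
    · refine cop1.dvd_of_dvd_mul_left ?_
      have e : q2 * q3 * B = N - (q1 * q3 * A + q2 * q1 * C) := by rw [hN]; ring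
      rw [e]
      exact dvd_sub dN1 (dvd_add ((dvd_mul_right q1 q3).mul_right A)
        ((dvd_mul_left q1 q2).mul_right C))
    · refine cop2.dvd_of_dvd_mul_left ?_
      have e : q1 * q3 * A = N - (q2 * q3 * B + q2 * q1 * C) := by rw [hN]; ring
      rw [e]
      exact dvd_sub dN2 (dvd_add ((dvd_mul_right q2 q3).mul_right B)
        ((dvd_mul_right q2 q1).mul_right C))
    · refine cop3.dvd_of_dvd_mul_left ?_
      have e : q2 * q1 * C = N - (q1 * q3 * A + q2 * q3 * B) := by rw [hN]; ring
      rw [e]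
      exact dvd_sub dN3 (dvd_add ((dvd_mul_left q3 q1).mul_right A)
        ((dvd_mul_left q3 q2).mul_right B))
end
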